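/- arXiv:math/0612068 — 3 statements merged into one kernel-verified Lean document; each statement's English description precedes it below -/
import Mathlib

section
/- Let p be a prime and let l_p(r,a) denote the number of a×a symmetric matrices of rank r over the field 𝔽_p. Then l_p(r,a) = l_p(r,r) · φ_a(p)/(φ_r(p)·φ_{a-r}(p)), where φ_i(x) = (x-1)(x²-1)⋯(x^i-1) and φ₀(x) = 1. -/
open Finset

/-- `φ_i(p) = ∏_{k=1}^i (p^k - 1)` as an integer. -/
def phiInt (p : ℕ) (i : ℕ) : ℤ := ∏ k ∈ Finset.range i, ((p : ℤ) ^ (k + 1) - 1)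

/-- The number of `a×a` symmetric matrices of rank `r` over `𝔽_p`. -/
noncomputable def lSym (p a r : ℕ) : ℕ :=
  Nat.card {M : Matrix (Fin a) (Fin a) (ZMod p) // M.IsSymm ∧ M.rank = r}

section Aux

open Matrix LinearMap Module

lemma nat_card_fiber_const {α β : Type*} [Finite α] [Finite β] (f : α → β) (c : ℕ)
    (h : ∀ b : β, Nat.card {x : α // f x = b} = c) :
    Nat.card α = Nat.card β * c := by
  classical
  cases nonempty_fintype α
  cases nonempty_fintype β
  rw [← Nat.card_congr (Equiv.sigmaFiberEquiv f)]
  rw [Nat.card_eq_fintype_card, Fintype.card_sigma]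
  have : ∀ b : β, Fintype.card {x : α // f x = b} = c := fun b => by
    rw [← Nat.card_eq_fintype_card, h b]
  simp [this, Nat.card_eq_fintype_card, Finset.card_univ, mul_comm]

variable {p : ℕ} [Fact p.Prime]


lemma fiber_subspace_card (a r : ℕ) (hra : r ≤ a)
    (U : Submodule (ZMod p) (Fin a → ZMod p)) (hU : finrank (ZMod p) U = r) :
    Nat.card {x : {s : Fin r → (Fin a → ZMod p) // LinearIndependent (ZMod p) s} //
        Submodule.span (ZMod p) (Set.range x.1) = U} =
      ∏ i : Fin r, (p ^ r - p ^ i.val) := by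
  have hcard : Fintype.card (ZMod p) = p := ZMod.card p
  have key : Nat.card {s : Fin r → U // LinearIndependent (ZMod p) s} =
      ∏ i : Fin r, (p ^ r - p ^ i.val) := by
    rw [card_linearIndependent (by rw [hU]), hcard, hU]
  rw [← key]
  refine Nat.card_congr ?_
  refine Equiv.ofBijective (fun x => ⟨fun i => ⟨x.1.1 i, by
      have h := Submodule.subset_span (R := ZMod p) (Set.mem_range_self (f := x.1.1) i)
      rwa [x.2] at h⟩, ?_⟩) ⟨?_, ?_⟩
  · exact (LinearIndependent.of_comp U.subtype (by exact x.1.2))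
  · rintro ⟨⟨s, hs⟩, h1⟩ ⟨⟨t, ht⟩, h2⟩ heq
    ext i j
    exact congrFun (congrArg (fun z => ((z i : U) : Fin a → ZMod p))
      (congrArg Subtype.val heq)) j
  · rintro ⟨s, hs⟩
    have hls : LinearIndependent (ZMod p) (fun i => (s i : Fin a → ZMod p)) :=
      hs.map' U.subtype (Submodule.ker_subtype U)
    have hspan : Submodule.span (ZMod p) (Set.range fun i => ((s i : Fin a → ZMod p))) = U := by
      have htop : Submodule.span (ZMod p) (Set.range s) = ⊤ := by
        apply Submodule.eq_top_of_finrank_eq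
        rw [finrank_span_eq_card hs, Fintype.card_fin, hU]
      have : (Set.range fun i => ((s i : Fin a → ZMod p))) = U.subtype '' (Set.range s) := by
        rw [← Set.range_comp]; rfl
      rw [this, ← Submodule.map_span, htop, Submodule.map_top, Submodule.range_subtype]
    exact ⟨⟨⟨fun i => (s i : Fin a → ZMod p), hls⟩, hspan⟩, by ext i : 2; rfl⟩

lemma grassmannian_count (a r : ℕ) (hra : r ≤ a) :
    Nat.card {U : Submodule (ZMod p) (Fin a → ZMod p) // finrank (ZMod p) U = r} *
      ∏ i : Fin r, (p ^ r - p ^ i.val) = ∏ i : Fin r, (p ^ a - p ^ i.val) := by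
  have hcard : Fintype.card (ZMod p) = p := ZMod.card p
  have hfr : finrank (ZMod p) (Fin a → ZMod p) = a := by
    rw [Module.finrank_fintype_fun_eq_card, Fintype.card_fin]
  have lhs : Nat.card {s : Fin r → (Fin a → ZMod p) // LinearIndependent (ZMod p) s} =
      ∏ i : Fin r, (p ^ a - p ^ i.val) := by
    rw [card_linearIndependent (by rw [hfr]; exact hra), hcard, hfr]
  rw [← lhs]
  refine (nat_card_fiber_const
    (fun (x : {s : Fin r → (Fin a → ZMod p) // LinearIndependent (ZMod p) s}) =>
      (⟨Submodule.span (ZMod p) (Set.range x.1), by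
      rw [finrank_span_eq_card x.2, Fintype.card_fin]⟩ :
      {U : Submodule (ZMod p) (Fin a → ZMod p) // finrank (ZMod p) U = r})) _ ?_).symm
  rintro ⟨U, hU⟩
  rw [← fiber_subspace_card a r hra U hU]
  exact Nat.card_congr (Equiv.subtypeEquivRight fun x => by
    constructor
    · intro h; exact congrArg Subtype.val h
    · intro h; exact Subtype.ext h)


lemma fiber_matrix_card (a r : ℕ) (U : Submodule (ZMod p) (Fin a → ZMod p))
    (hU : finrank (ZMod p) U = r) :
    Nat.card {x : {M : Matrix (Fin a) (Fin a) (ZMod p) // M.IsSymm ∧ M.rank = r} //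
        LinearMap.range x.1.mulVecLin = U} = lSym p r r := by
  classical
  have hrr : finrank (ZMod p) (Fin r → ZMod p) = r := by
    rw [Module.finrank_fintype_fun_eq_card, Fintype.card_fin]
  let b : Basis (Fin r) (ZMod p) U := finBasisOfFinrankEq (ZMod p) U hU
  set C : Matrix (Fin a) (Fin r) (ZMod p) := Matrix.of fun j i => (b i : Fin a → ZMod p) j
    with hCdef
  have hC : C.mulVecLin = U.subtype ∘ₗ (b.equivFun.symm : (Fin r → ZMod p) →ₗ[ZMod p] U) := by
    apply LinearMap.ext; intro x
    ext j
    simp [hCdef, Matrix.mulVecLin_apply, Matrix.mulVec, dotProduct,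
      Module.Basis.equivFun_symm_apply, Finset.sum_apply, mul_comm]
  have hCinj : Function.Injective C.mulVecLin := by
    rw [hC]
    exact (Submodule.injective_subtype U).comp b.equivFun.symm.injective
  have hCrange : LinearMap.range C.mulVecLin = U := by
    rw [hC, LinearMap.range_comp, LinearEquiv.range, Submodule.map_top, Submodule.range_subtype]
  have hCrank : C.rank = r := by
    rw [Matrix.rank, hCrange, hU]
  have hCt : LinearMap.range Cᵀ.mulVecLin = ⊤ := by
    apply Submodule.eq_top_of_finrank_eq
    rw [hrr]
    rw [show finrank (ZMod p) (LinearMap.range Cᵀ.mulVecLin) = Cᵀ.rank from rfl,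
      Matrix.rank_transpose, hCrank]
  have hCtsurj : ∀ y : Fin r → ZMod p, ∃ x, Cᵀ *ᵥ x = y := by
    intro y
    obtain ⟨x, hx⟩ := LinearMap.range_eq_top.mp hCt y
    exact ⟨x, hx⟩
  -- cancellation
  have hcancel : ∀ B B' : Matrix (Fin r) (Fin r) (ZMod p),
      C * B * Cᵀ = C * B' * Cᵀ → B = B' := by
    intro B B' h
    have h2 : ∀ y, B *ᵥ y = B' *ᵥ y := by
      intro y
      obtain ⟨x, hx⟩ := hCtsurj y
      have e1 : C *ᵥ (B *ᵥ y) = C *ᵥ (B' *ᵥ y) := by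
        conv_lhs => rw [← hx]
        conv_rhs => rw [← hx]
        simp only [Matrix.mulVec_mulVec]
        rw [← Matrix.mul_assoc, ← Matrix.mul_assoc, h]
      exact hCinj e1
    ext i j
    have := congrFun (h2 (Pi.single j 1)) i
    simpa [Matrix.mulVec_single] using this
  -- factorization through C
  have hfactor : ∀ (κ : Type) (_ : Fintype κ) (_ : DecidableEq κ)
      (N : Matrix (Fin a) κ (ZMod p)), (∀ v, N *ᵥ v ∈ U) →
      ∃ A : Matrix (Fin r) κ (ZMod p), N = C * A := by
    intro κ _ _ N hN
    have h1 : ∀ j : κ, ∃ w : Fin r → ZMod p, C *ᵥ w = N *ᵥ Pi.single j 1 := by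
      intro j
      have hm : N *ᵥ Pi.single j 1 ∈ U := hN _
      rw [← hCrange] at hm
      obtain ⟨w, hw⟩ := hm
      exact ⟨w, hw⟩
    choose w hw using h1
    refine ⟨Matrix.of fun k j => w j k, ?_⟩
    ext i j
    have h2 := congrFun (hw j) i
    simp only [Matrix.mulVec_single, mul_one, MulOpposite.op_one, one_smul, Matrix.col_apply] at h2
    rw [← h2]
    simp [Matrix.mul_apply, Matrix.mulVec, dotProduct]
  -- ranges of products
  have hrange' : ∀ B : Matrix (Fin r) (Fin r) (ZMod p), B.rank = r →
      LinearMap.range (C * B * Cᵀ).mulVecLin = U := by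
    intro B hB
    have hBtop : LinearMap.range B.mulVecLin = ⊤ := by
      apply Submodule.eq_top_of_finrank_eq
      rw [hrr]
      exact hB
    rw [Matrix.mulVecLin_mul, LinearMap.range_comp_of_range_eq_top _ hCt,
      Matrix.mulVecLin_mul, LinearMap.range_comp_of_range_eq_top _ hBtop, hCrange]
  -- the bijection
  rw [lSym]
  refine (Nat.card_congr (Equiv.ofBijective
    (fun (B : {B : Matrix (Fin r) (Fin r) (ZMod p) // B.IsSymm ∧ B.rank = r}) =>
      (⟨⟨C * B.1 * Cᵀ, ⟨?_, ?_⟩⟩, hrange' B.1 B.2.2⟩ :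
        {x : {M : Matrix (Fin a) (Fin a) (ZMod p) // M.IsSymm ∧ M.rank = r} //
          LinearMap.range x.1.mulVecLin = U})) ⟨?_, ?_⟩)).symm
  · -- symmetry
    show (C * B.1 * Cᵀ)ᵀ = C * B.1 * Cᵀ
    rw [Matrix.transpose_mul, Matrix.transpose_mul, Matrix.transpose_transpose, B.2.1,
      Matrix.mul_assoc]
  · -- rank
    show (C * B.1 * Cᵀ).rank = r
    rw [Matrix.rank, hrange' B.1 B.2.2, hU]
  · -- injective
    rintro B B' heq
    apply Subtype.ext
    exact hcancel _ _ (congrArg (fun z => (z.1.1 : Matrix (Fin a) (Fin a) (ZMod p))) heq)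
  · -- surjective
    rintro ⟨⟨M, hMsymm, hMrank⟩, hMrange⟩
    have hMcol : ∀ v, M *ᵥ v ∈ U := by
      intro v
      rw [← hMrange]
      exact ⟨v, rfl⟩
    obtain ⟨A, hA⟩ := hfactor (Fin a) inferInstance inferInstance M hMcol
    have hATcol : ∀ y, Aᵀ *ᵥ y ∈ U := by
      intro y
      obtain ⟨x, hx⟩ := hCtsurj y
      rw [← hx, Matrix.mulVec_mulVec]
      have : Aᵀ * Cᵀ = M := by
        rw [← Matrix.transpose_mul, ← hA, hMsymm]
      rw [this]
      exact hMcol x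
    obtain ⟨B₀, hB₀⟩ := hfactor (Fin r) inferInstance inferInstance Aᵀ hATcol
    have hM : M = C * B₀ᵀ * Cᵀ := by
      rw [Matrix.mul_assoc, ← Matrix.transpose_mul, ← hB₀, Matrix.transpose_transpose, hA]
    have hBsymm : B₀ᵀ.IsSymm := by
      apply hcancel
      have h1 : (C * B₀ᵀ * Cᵀ)ᵀ = C * B₀ᵀ * Cᵀ := by rw [← hM]; exact hMsymm
      rw [Matrix.transpose_mul, Matrix.transpose_mul, Matrix.transpose_transpose,
        ← Matrix.mul_assoc] at h1
      exact h1
    have hBrank : B₀ᵀ.rank = r := by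
      have e1 : LinearMap.range M.mulVecLin =
          (LinearMap.range B₀ᵀ.mulVecLin).map C.mulVecLin := by
        rw [hM, Matrix.mulVecLin_mul, LinearMap.range_comp_of_range_eq_top _ hCt,
          Matrix.mulVecLin_mul, LinearMap.range_comp]
      have e2 := (Submodule.equivMapOfInjective C.mulVecLin hCinj
        (LinearMap.range B₀ᵀ.mulVecLin)).finrank_eq
      calc B₀ᵀ.rank
          = finrank (ZMod p) (Submodule.map C.mulVecLin (LinearMap.range B₀ᵀ.mulVecLin)) := e2
        _ = finrank (ZMod p) (LinearMap.range M.mulVecLin) := by rw [← e1]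
        _ = r := hMrank
    refine ⟨⟨B₀ᵀ, hBsymm, hBrank⟩, ?_⟩
    apply Subtype.ext
    apply Subtype.ext
    exact hM.symm

lemma lSym_eq (a r : ℕ) :
    lSym p a r =
      Nat.card {U : Submodule (ZMod p) (Fin a → ZMod p) // finrank (ZMod p) U = r} *
        lSym p r r := by
  rw [lSym]
  refine nat_card_fiber_const
    (fun (x : {M : Matrix (Fin a) (Fin a) (ZMod p) // M.IsSymm ∧ M.rank = r}) =>
      (⟨LinearMap.range x.1.mulVecLin, x.2.2⟩ :
        {U : Submodule (ZMod p) (Fin a → ZMod p) // finrank (ZMod p) U = r})) _ ?_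
  rintro ⟨U, hU⟩
  rw [← fiber_matrix_card a r U hU]
  exact Nat.card_congr (Equiv.subtypeEquivRight fun x => by
    constructor
    · intro h; exact congrArg Subtype.val h
    · intro h; exact Subtype.ext h)

end Aux

/-- `l_p(r,a) = l_p(r,r) · φ_a(p)/(φ_r(p)·φ_{a-r}(p))`, stated without division. -/
theorem rank_count_formula (p : ℕ) (hp : p.Prime) (r a : ℕ) (hra : r ≤ a) :
    (lSym p a r : ℤ) * (phiInt p r * phiInt p (a - r)) = (lSym p r r : ℤ) * phiInt p a := by
  haveI : Fact p.Prime := ⟨hp⟩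
  set N : ℕ :=
    Nat.card {U : Submodule (ZMod p) (Fin a → ZMod p) // Module.finrank (ZMod p) U = r} with hN
  have hgr := grassmannian_count (p := p) a r hra
  have hple : ∀ i x : ℕ, i < r → r ≤ x → p ^ i ≤ p ^ x := fun i x hi hx =>
    Nat.pow_le_pow_right hp.one_lt.le (le_trans hi.le hx)
  have cast_prod : ∀ x : ℕ, r ≤ x →
      ((∏ i : Fin r, (p ^ x - p ^ i.val) : ℕ) : ℤ) =
        ∏ i ∈ Finset.range r, ((p : ℤ) ^ x - (p : ℤ) ^ i) := by
    intro x hx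
    rw [Fin.prod_univ_eq_prod_range (fun k => p ^ x - p ^ k) r, Nat.cast_prod]
    refine Finset.prod_congr rfl fun i hi => ?_
    rw [Finset.mem_range] at hi
    rw [Nat.cast_sub (hple i x hi hx), Nat.cast_pow, Nat.cast_pow]
  have factor : ∀ x : ℕ, r ≤ x →
      ∏ i ∈ Finset.range r, ((p : ℤ) ^ x - (p : ℤ) ^ i) =
        (∏ i ∈ Finset.range r, (p : ℤ) ^ i) *
          ∏ i ∈ Finset.range r, ((p : ℤ) ^ (x - i) - 1) := by
    intro x hx
    rw [← Finset.prod_mul_distrib]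
    refine Finset.prod_congr rfl fun i hi => ?_
    rw [Finset.mem_range] at hi
    have h1 : i + (x - i) = x := by omega
    rw [mul_sub, mul_one, ← pow_add, h1]
  have reflect_r : ∏ i ∈ Finset.range r, ((p : ℤ) ^ (r - i) - 1) = phiInt p r := by
    have h2 := Finset.prod_range_reflect (fun k => (p : ℤ) ^ (k + 1) - 1) r
    rw [phiInt, ← h2]
    refine Finset.prod_congr rfl fun i hi => ?_
    rw [Finset.mem_range] at hi
    have h3 : r - 1 - i + 1 = r - i := by omega
    rw [h3]
  have split_a : phiInt p a = phiInt p (a - r) * ∏ i ∈ Finset.range r, ((p : ℤ) ^ (a - i) - 1) := by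
    have h1 : a = (a - r) + r := by omega
    have h2 := Finset.prod_range_add (fun k => (p : ℤ) ^ (k + 1) - 1) (a - r) r
    have h3 := Finset.prod_range_reflect (fun k => (p : ℤ) ^ (a - r + k + 1) - 1) r
    rw [phiInt, phiInt]
    calc ∏ k ∈ Finset.range a, ((p : ℤ) ^ (k + 1) - 1)
        = ∏ k ∈ Finset.range ((a - r) + r), ((p : ℤ) ^ (k + 1) - 1) := by rw [← h1]
      _ = (∏ k ∈ Finset.range (a - r), ((p : ℤ) ^ (k + 1) - 1)) *
            ∏ k ∈ Finset.range r, ((p : ℤ) ^ (a - r + k + 1) - 1) := h2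
      _ = (∏ k ∈ Finset.range (a - r), ((p : ℤ) ^ (k + 1) - 1)) *
            ∏ i ∈ Finset.range r, ((p : ℤ) ^ (a - i) - 1) := by
          rw [← h3]
          refine congrArg _ (Finset.prod_congr rfl fun i hi => ?_)
          rw [Finset.mem_range] at hi
          have h4 : a - r + (r - 1 - i) + 1 = a - i := by omega
          rw [h4]
  have hpne : (∏ i ∈ Finset.range r, (p : ℤ) ^ i) ≠ 0 := by
    apply Finset.prod_ne_zero_iff.mpr
    intro i _
    exact pow_ne_zero _ (by exact_mod_cast hp.ne_zero)
  have key : (N : ℤ) * (phiInt p r * phiInt p (a - r)) = phiInt p a := by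
    have hcast : (N : ℤ) * ∏ i ∈ Finset.range r, ((p : ℤ) ^ r - (p : ℤ) ^ i) =
        ∏ i ∈ Finset.range r, ((p : ℤ) ^ a - (p : ℤ) ^ i) := by
      rw [← cast_prod r le_rfl, ← cast_prod a hra, ← Nat.cast_mul, hgr]
    rw [factor r le_rfl, factor a hra, reflect_r] at hcast
    have hcancel : (N : ℤ) * phiInt p r = ∏ i ∈ Finset.range r, ((p : ℤ) ^ (a - i) - 1) := by
      apply mul_left_cancel₀ hpne
      rw [← hcast]; ring
    rw [split_a, ← hcancel]
    ring
  rw [lSym_eq a r, ← hN]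
  push_cast
  linear_combination (lSym p r r : ℤ) * key
end

section
/- In ℚ(x₀,x₁,x₂,x₃,x₄)[[X]], the product ∏_{S ⊆ {1,2,3,4}} (1 - x₀ (∏_{i∈S} x_i) X) is a polynomial of degree 16 in X whose coefficients f_k (as elements of ℚ[x₀,x₁,x₂,x₃,x₄]) satisfy the functional equation f_{16-k} = f_k · (x₀² x₁x₂x₃x₄)^{8-k} for all 0 ≤ k ≤ 16. -/
open Finset

/-- The spherical image of the genus-4 denominator:
`∏_{S ⊆ {1,2,3,4}} (1 - x₀ (∏_{i∈S} x_i) X)` over `ℚ[x₀,x₁,x₂,x₃,x₄]`. -/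
noncomputable def sphericalF4 : Polynomial (MvPolynomial (Fin 5) ℚ) :=
  ∏ S : Finset (Fin 4),
    (1 - Polynomial.C (MvPolynomial.X 0 * ∏ i ∈ S, MvPolynomial.X (i.succ)) * Polynomial.X)

/-! If the roots `a i` of `P = ∏ (1 - a i X)` pair up as `a i * a (σ i) = u`, then substituting
`X ↦ u X` into the reversed polynomial `∏ (X - a i)` gives back `P` up to the constant
`(-1)^n ∏ a i`; comparing coefficients of `X^k` is the functional equation. For the genus-4
denominator `σ` is complementation of subsets and `∏ a i = u^8`. -/

namespace Polynomial

section OneSubCMulX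

variable {R : Type*} [CommRing R]

theorem one_sub_C_mul_X_eq (a : R) : (1 - C a * X : R[X]) = C (-a) * X + C 1 := by
  simp only [map_neg, map_one]
  ring

theorem natDegree_one_sub_C_mul_X {a : R} (ha : a ≠ 0) : (1 - C a * X).natDegree = 1 := by
  rw [one_sub_C_mul_X_eq]
  exact natDegree_linear (neg_ne_zero.2 ha)

theorem reverse_one_sub_C_mul_X {a : R} (ha : a ≠ 0) : (1 - C a * X).reverse = X - C a := by
  rw [one_sub_C_mul_X_eq, reverse_add_C, reverse_mul_X, reverse_C,
    natDegree_C_mul_X _ (neg_ne_zero.2 ha), map_neg, map_one]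
  ring

end OneSubCMulX

theorem reverse_prod {R ι : Type*} [CommSemiring R] [NoZeroDivisors R] (s : Finset ι)
    (f : ι → R[X]) :
    (∏ i ∈ s, f i).reverse = ∏ i ∈ s, (f i).reverse := by
  induction s using Finset.cons_induction with
  | empty => simpa using reverse_C (1 : R)
  | cons i s hi ih => rw [prod_cons, prod_cons, reverse_mul_of_domain, ih]

section PairedRoots

variable {R ι : Type*} [CommRing R] [NoZeroDivisors R] [Fintype ι] (a : ι → R)

theorem natDegree_prod_one_sub_C_mul_X (ha : ∀ i, a i ≠ 0) :
    (∏ i, (1 - C (a i) * X)).natDegree = Fintype.card ι := by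
  rw [natDegree_prod _ _ fun i _ h => by simpa [h] using natDegree_one_sub_C_mul_X (ha i)]
  simp [natDegree_one_sub_C_mul_X (ha _)]

theorem reverse_prod_one_sub_C_mul_X_comp (ha : ∀ i, a i ≠ 0) (σ : Equiv.Perm ι) {u : R}
    (hu : ∀ i, a i * a (σ i) = u) :
    (∏ i, (1 - C (a i) * X)).reverse.comp (C u * X) =
      C ((-1) ^ Fintype.card ι * ∏ i, a i) * ∏ i, (1 - C (a i) * X) := by
  have hfactor : ∀ i, (X - C (a i)).comp (C u * X) = C (a i) * (C (a (σ i)) * X - 1) := by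
    intro i
    rw [sub_comp, X_comp, C_comp, ← hu i, C_mul]
    ring
  have hperm : ∏ i, (C (a (σ i)) * X - 1) = ∏ i, (C (a i) * X - 1) :=
    Equiv.prod_comp σ fun i => C (a i) * X - 1
  calc (∏ i, (1 - C (a i) * X)).reverse.comp (C u * X)
      = ∏ i, C (a i) * (C (a (σ i)) * X - 1) := by
        simp only [reverse_prod, reverse_one_sub_C_mul_X (ha _), prod_comp, hfactor]
    _ = C (∏ i, a i) * ∏ i, (-1) * (1 - C (a i) * X) := by
        rw [prod_mul_distrib, hperm, map_prod]
        simp only [neg_one_mul, neg_sub]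
    _ = _ := by
        rw [prod_mul_distrib, prod_const, card_univ, map_mul, map_pow, map_neg, map_one]
        ring

theorem coeff_prod_one_sub_C_mul_X_functional_equation (ha : ∀ i, a i ≠ 0) (σ : Equiv.Perm ι)
    {u : R} (hu : ∀ i, a i * a (σ i) = u) {k : ℕ} (hk : k ≤ Fintype.card ι) :
    (∏ i, (1 - C (a i) * X)).coeff (Fintype.card ι - k) * u ^ k =
      (-1) ^ Fintype.card ι * (∏ i, a i) * (∏ i, (1 - C (a i) * X)).coeff k := by
  have h := congrArg (coeff · k) (reverse_prod_one_sub_C_mul_X_comp a ha σ hu)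
  simpa only [comp_C_mul_X_coeff, coeff_reverse, natDegree_prod_one_sub_C_mul_X a ha,
    revAt_le hk, coeff_C_mul] using h

end PairedRoots

end Polynomial

theorem Finset.prod_univ_prod_eq_prod_pow_card {ι M : Type*} [Fintype ι] [DecidableEq ι]
    [CommMonoid M] (f : ι → M) :
    ∏ S : Finset ι, ∏ i ∈ S, f i = ∏ i, f i ^ #{S : Finset ι | i ∈ S} := by
  rw [prod_comm' (t' := univ) (s' := fun i => {S : Finset ι | i ∈ S}) (by simp)]
  simp only [prod_const]

/-- The genus-4 denominator image is a degree-16 polynomial in `X` whose coefficients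
satisfy the functional equation `f_{16-k} = f_k · (x₀²x₁x₂x₃x₄)^{8-k}`, stated in the
division-free form `f_{16-k}·u^k = f_k·u^8` with `u = x₀²x₁x₂x₃x₄`. -/
theorem sphericalF4_functional_equation :
    sphericalF4.natDegree = 16 ∧
    ∀ k ≤ 16,
      sphericalF4.coeff (16 - k) *
          (MvPolynomial.X 0 ^ 2 * ∏ i : Fin 4, MvPolynomial.X (i.succ)) ^ k =
        sphericalF4.coeff k *
          (MvPolynomial.X 0 ^ 2 * ∏ i : Fin 4, MvPolynomial.X (i.succ)) ^ 8 := by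
  set a : Finset (Fin 4) → MvPolynomial (Fin 5) ℚ :=
    fun S => MvPolynomial.X 0 * ∏ i ∈ S, MvPolynomial.X i.succ
  set u : MvPolynomial (Fin 5) ℚ := MvPolynomial.X 0 ^ 2 * ∏ i : Fin 4, MvPolynomial.X i.succ
  have hcard : Fintype.card (Finset (Fin 4)) = 16 := by simp
  have ha : ∀ S, a S ≠ 0 := fun S =>
    mul_ne_zero (MvPolynomial.X_ne_zero _) (prod_ne_zero_iff.2 fun i _ => MvPolynomial.X_ne_zero _)
  have hcompl : ∀ S, a S * a (Function.Involutive.toPerm _ compl_involutive S) = u := fun S => by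
    simp only [a, u, Function.Involutive.coe_toPerm]
    rw [mul_mul_mul_comm, ← sq, prod_mul_prod_compl]
  have hprod : ∏ S, a S = u ^ 8 := by
    have hmem : ∀ i : Fin 4, #{S : Finset (Fin 4) | i ∈ S} = 8 := by decide
    simp only [a, u, prod_mul_distrib, prod_const, card_univ, hcard,
      prod_univ_prod_eq_prod_pow_card, hmem, mul_pow, prod_pow, ← pow_mul]
  refine ⟨hcard ▸ Polynomial.natDegree_prod_one_sub_C_mul_X a ha, fun k hk => ?_⟩
  have h := Polynomial.coeff_prod_one_sub_C_mul_X_functional_equation a ha _ hcompl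
    (hcard ▸ hk : k ≤ Fintype.card (Finset (Fin 4)))
  rw [hcard, hprod] at h
  rw [sphericalF4, h]
  ring
end

section
/- For n ≥ 1, the polynomial ∏_{S⊆{1,…,n}}(1 − x₀(∏_{i∈S}x_i)X) in X has degree 2ⁿ and its coefficient sequence (g_k) satisfies g_{2ⁿ−k} = g_k · (x₀²·x₁⋯x_n)^{2^{n-1}−k} for all 0 ≤ k ≤ 2ⁿ, as elements of ℤ[x₀,…,x_n]. -/
open Finset

/-- The generic spherical denominator of genus `n`:
`∏_{S⊆{1,…,n}} (1 - x₀(∏_{i∈S}x_i)X)` over `ℤ[x₀,x₁,…,x_n]`. -/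
noncomputable def genericDenom (n : ℕ) : Polynomial (MvPolynomial (Fin (n + 1)) ℤ) :=
  ∏ S : Finset (Fin n),
    (1 - Polynomial.C (MvPolynomial.X 0 * ∏ i ∈ S, MvPolynomial.X (i.succ)) * Polynomial.X)

noncomputable def gdB (n : ℕ) (S : Finset (Fin n)) : MvPolynomial (Fin (n + 1)) ℤ :=
  -(MvPolynomial.X 0 * ∏ i ∈ S, MvPolynomial.X (i.succ))

noncomputable def gdU (n : ℕ) : MvPolynomial (Fin (n + 1)) ℤ :=
  MvPolynomial.X 0 ^ 2 * ∏ i : Fin n, MvPolynomial.X (i.succ)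

lemma gdB_ne_zero (n : ℕ) (S : Finset (Fin n)) : gdB n S ≠ 0 := by
  simp only [gdB, neg_ne_zero]
  exact mul_ne_zero (MvPolynomial.X_ne_zero _)
    (Finset.prod_ne_zero_iff.2 fun i _ => MvPolynomial.X_ne_zero _)

lemma gdB_mul_compl (n : ℕ) (S : Finset (Fin n)) : gdB n S * gdB n Sᶜ = gdU n := by
  simp only [gdB, gdU, neg_mul_neg]
  rw [mul_mul_mul_comm, Finset.prod_mul_prod_compl, sq]

lemma genericDenom_coeff_eq (n k : ℕ) :
    (genericDenom n).coeff k = ∑ t ∈ Finset.powersetCard k (Finset.univ : Finset (Finset (Fin n))),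
      ∏ S ∈ t, gdB n S := by
  have h1 : genericDenom n = ∑ t ∈ (Finset.univ : Finset (Finset (Fin n))).powerset,
      Polynomial.C (∏ S ∈ t, gdB n S) * Polynomial.X ^ t.card := by
    rw [genericDenom]
    have : ∀ S : Finset (Fin n),
        (1 - Polynomial.C (MvPolynomial.X 0 * ∏ i ∈ S, MvPolynomial.X (i.succ)) * Polynomial.X)
        = Polynomial.C (gdB n S) * Polynomial.X + 1 := by
      intro S; rw [gdB, map_neg]; ring
    simp_rw [this]
    rw [Finset.prod_add]
    refine Finset.sum_congr rfl fun t ht => ?_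
    rw [Finset.prod_const_one, mul_one, Finset.prod_mul_distrib, Finset.prod_const,
      ← map_prod]
  rw [h1, Polynomial.finset_sum_coeff]
  simp_rw [Polynomial.coeff_C_mul, Polynomial.coeff_X_pow]
  rw [Finset.powersetCard_eq_filter, Finset.sum_filter]
  refine Finset.sum_congr rfl fun t ht => ?_
  by_cases h : t.card = k
  · simp [h]
  · rw [if_neg (fun hh => h hh.symm), mul_zero, if_neg h]

lemma genericDenom_prod_univ (n : ℕ) (hn : 1 ≤ n) :
    ∏ S : Finset (Fin n), gdB n S = gdU n ^ 2 ^ (n - 1) := by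
  have z : Fin n := ⟨0, hn⟩
  have hfilter : (Finset.univ.filter fun S : Finset (Fin n) => z ∉ S)
      = (Finset.univ.erase z).powerset := by
    ext S
    simp [Finset.subset_erase]
  have hcard : (Finset.univ.filter fun S : Finset (Fin n) => z ∉ S).card = 2 ^ (n - 1) := by
    rw [hfilter, Finset.card_powerset, Finset.card_erase_of_mem (Finset.mem_univ z),
      Finset.card_univ, Fintype.card_fin]
  rw [← Finset.prod_filter_mul_prod_filter_not Finset.univ (fun S => z ∈ S)]
  have hbij : (∏ S ∈ Finset.univ.filter fun S : Finset (Fin n) => z ∈ S, gdB n S)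
      = ∏ S ∈ Finset.univ.filter fun S : Finset (Fin n) => ¬ z ∈ S, gdB n Sᶜ := by
    refine Finset.prod_nbij' (fun S => Sᶜ) (fun S => Sᶜ) ?_ ?_ ?_ ?_ ?_
    · intro S hS; simp at hS ⊢; exact hS
    · intro S hS; simp at hS ⊢; exact hS
    · intro S _; exact compl_compl S
    · intro S _; exact compl_compl S
    · intro S _; rw [compl_compl]
  rw [hbij, ← Finset.prod_mul_distrib]
  have : ∀ S ∈ Finset.univ.filter fun S : Finset (Fin n) => ¬ z ∈ S,
      gdB n Sᶜ * gdB n S = gdU n := fun S _ => by rw [mul_comm]; exact gdB_mul_compl n S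
  rw [Finset.prod_congr rfl this, Finset.prod_const, hcard]

lemma image_compl_helper {n : ℕ} (s : Finset (Finset (Fin n))) (a : Finset (Fin n)) :
    a ∈ s.image compl ↔ aᶜ ∈ s := by
  simp only [Finset.mem_image]
  constructor
  · rintro ⟨b, hb, rfl⟩; simpa using hb
  · intro h; exact ⟨aᶜ, h, compl_compl a⟩

lemma genericDenom_natDegree_eq (n : ℕ) : (genericDenom n).natDegree = 2 ^ n := by
  have hgd : genericDenom n = ∏ S : Finset (Fin n),
      (Polynomial.C (gdB n S) * Polynomial.X + Polynomial.C 1) := by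
    rw [genericDenom]
    refine Finset.prod_congr rfl fun S _ => ?_
    rw [gdB, map_neg, map_one]; ring
  rw [hgd, Polynomial.natDegree_prod]
  · simp_rw [Polynomial.natDegree_linear (gdB_ne_zero n _)]
    rw [Finset.sum_const, Finset.card_univ, Fintype.card_finset, Fintype.card_fin, smul_eq_mul,
      mul_one]
  · intro S _ h0
    have := congrArg (fun p => Polynomial.coeff p 0) h0
    simp at this

theorem genericDenom_palindromic_aux (n : ℕ) (hn : 1 ≤ n) :
    ∀ k ≤ 2 ^ n, (genericDenom n).coeff (2 ^ n - k) * gdU n ^ k = (genericDenom n).coeff k * gdU n ^ 2 ^ (n - 1) := by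
  intro k hk
  rw [genericDenom_coeff_eq, genericDenom_coeff_eq, Finset.sum_mul, Finset.sum_mul]
  refine Finset.sum_nbij' (fun t => Finset.univ \ t.image compl)
    (fun t => Finset.univ \ t.image compl) ?_ ?_ ?_ ?_ ?_
  · intro t ht
    rw [Finset.mem_powersetCard_univ] at ht ⊢
    rw [Finset.card_sdiff_of_subset (Finset.subset_univ _), Finset.card_univ, Fintype.card_finset,
      Fintype.card_fin, Finset.card_image_of_injective _ compl_injective, ht]
    omega
  · intro t ht
    rw [Finset.mem_powersetCard_univ] at ht ⊢
    rw [Finset.card_sdiff_of_subset (Finset.subset_univ _), Finset.card_univ, Fintype.card_finset,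
      Fintype.card_fin, Finset.card_image_of_injective _ compl_injective, ht]
  · intro t _
    ext a
    simp [image_compl_helper, compl_compl]
  · intro t _
    ext a
    simp [image_compl_helper, compl_compl]
  · intro t ht
    rw [Finset.mem_powersetCard_univ] at ht
    have hc : (∏ S ∈ t.image compl, gdB n S) ≠ 0 :=
      Finset.prod_ne_zero_iff.2 fun S _ => gdB_ne_zero n S
    apply mul_right_cancel₀ hc
    have h1 : (∏ S ∈ t, gdB n S) * ∏ S ∈ t.image compl, gdB n S = gdU n ^ (2 ^ n - k) := by
      rw [Finset.prod_image (fun a _ b _ h => compl_injective h), ← Finset.prod_mul_distrib]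
      rw [Finset.prod_congr rfl fun S _ => gdB_mul_compl n S, Finset.prod_const, ht]
    have h2 : (∏ S ∈ Finset.univ \ t.image compl, gdB n S) * ∏ S ∈ t.image compl, gdB n S
        = gdU n ^ 2 ^ (n - 1) := by
      rw [Finset.prod_sdiff (Finset.subset_univ _), genericDenom_prod_univ n hn]
    calc (∏ S ∈ t, gdB n S) * gdU n ^ k * ∏ S ∈ t.image compl, gdB n S
        = ((∏ S ∈ t, gdB n S) * ∏ S ∈ t.image compl, gdB n S) * gdU n ^ k := by ring
      _ = gdU n ^ (2 ^ n - k) * gdU n ^ k := by rw [h1]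
      _ = gdU n ^ 2 ^ (n - 1) * gdU n ^ 2 ^ (n - 1) := by
          rw [← pow_add, ← pow_add]
          congr 1
          have h2n : 2 ^ (n - 1) + 2 ^ (n - 1) = 2 ^ n := by
            rw [← two_mul, ← pow_succ', Nat.sub_add_cancel hn]
          omega
      _ = (∏ S ∈ Finset.univ \ t.image compl, gdB n S) * gdU n ^ 2 ^ (n - 1) *
            ∏ S ∈ t.image compl, gdB n S := by rw [← h2]; ring

/-- For `n ≥ 1`, `∏_{S⊆{1,…,n}}(1 - x₀(∏_{i∈S}x_i)X)` has degree `2ⁿ` in `X` and its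
coefficients satisfy `g_{2ⁿ-k} = g_k·(x₀²x₁⋯x_n)^{2^{n-1}-k}`, stated in the
division-free form `g_{2ⁿ-k}·u^k = g_k·u^{2^{n-1}}`. -/
theorem genericDenom_palindromic (n : ℕ) (hn : 1 ≤ n) :
    (genericDenom n).natDegree = 2 ^ n ∧
    ∀ k ≤ 2 ^ n,
      (genericDenom n).coeff (2 ^ n - k) *
          (MvPolynomial.X 0 ^ 2 * ∏ i : Fin n, MvPolynomial.X (i.succ)) ^ k =
        (genericDenom n).coeff k *
          (MvPolynomial.X 0 ^ 2 * ∏ i : Fin n, MvPolynomial.X (i.succ)) ^ (2 ^ (n - 1)) := by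
  exact ⟨genericDenom_natDegree_eq n, genericDenom_palindromic_aux n hn⟩
end
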